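/- As formal power series over ℚ, 49x·(x^7;x^7)_∞^7/(x;x)_∞^8 = 49·∑_{n≥1} B_{n−1}(1!·e_1, …, (n−1)!·e_{n−1}) x^n/(n−1)!, where B_k denotes the k-th complete exponential Bell polynomial and for n = 7^m·n' with m ≥ 0 and 7 ∤ n', e_n = (σ(n)/n)·(1 + 42/(7^{m+1} − 1)). -/

import Mathlib

noncomputable section

/-- `sigma' n` is the sum of all positive divisors of `n` (including `1` and `n`). -/
def sigma' (n : ℕ) : ℕ := ∑ d ∈ n.divisors, d

/-- The q-Pochhammer symbol `(x^r; x^r)_∞ = ∏_{k≥1} (1 − x^{r·k})` as a formal power series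
over `ℚ`.  The factor for index `k` only affects coefficients of degree `≥ r·k`, so the `n`-th
coefficient of the infinite product equals that of the finite product over `k = 1, …, n+1`. -/
def pochhammerPS (r : ℕ) : PowerSeries ℚ :=
  PowerSeries.mk fun n =>
    PowerSeries.coeff n
      (∏ k ∈ Finset.range (n + 1), (1 - (PowerSeries.X : PowerSeries ℚ) ^ (r * (k + 1))))

/-- The formal logarithm of a power series with constant coefficient `1`:
`log f = −∑_{k≥1} (1 − f)^k / k`.  Since `1 − f` has zero constant term, `(1 − f)^k` does not
contribute to the `n`-th coefficient when `k > n` (and the `k = 0` term vanishes since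
division by zero is zero). -/
def logPS (f : PowerSeries ℚ) : PowerSeries ℚ :=
  PowerSeries.mk fun n =>
    - ∑ k ∈ Finset.range (n + 1), PowerSeries.coeff n ((1 - f) ^ k) / (k : ℚ)

/-- The formal exponential of a power series with constant coefficient `0`:
`exp f = ∑_{k≥0} f^k / k!`.  Since `f` has zero constant term, `f^k` does not contribute to
the `n`-th coefficient when `k > n`. -/
def expPS (f : PowerSeries ℚ) : PowerSeries ℚ :=
  PowerSeries.mk fun n =>
    ∑ k ∈ Finset.range (n + 1), PowerSeries.coeff n (f ^ k) / (Nat.factorial k : ℚ)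

/-- The `n`-th complete exponential Bell polynomial evaluated at `(x_1, x_2, …)`, defined via
the generating identity `exp(∑_{m≥1} x_m t^m/m!) = ∑_{n≥0} B_n(x_1, …, x_n) t^n/n!`
(with `B_0 = 1`): `B_n(x_1, …, x_n)` is `n!` times the `n`-th coefficient of the left side. -/
def bellComplete (x : ℕ → ℚ) (n : ℕ) : ℚ :=
  (Nat.factorial n : ℚ) *
    PowerSeries.coeff n
      (expPS (PowerSeries.mk fun m => if m = 0 then 0 else x m / (Nat.factorial m : ℚ)))

/-!
Both sides are `49 x` times a power series with constant term `1`, so it suffices that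
`(x⁷;x⁷)⁷/(x;x)⁸` and `exp (∑ eₙ xⁿ)` have the same logarithmic derivative.
Since `d log (1 - x^c) = -c ∑_{j ≥ 1} x^{cj-1}`, the logarithmic derivative of `(x^r;x^r)_∞` is
`-r ∑ σ(n) x^{rn-1}`; the infinite product is handled through its partial products, which agree
with it modulo ever higher powers of `x`. Hence `(x⁷;x⁷)⁷/(x;x)⁸` has logarithmic derivative
`∑ (8 σ(n) - 49 σ(n/7) [7 ∣ n]) x^{n-1}`, and multiplicativity of `σ` shows that this coefficient is
`n eₙ`. The right-hand side is `49 x exp (∑ eₙ xⁿ)` by the definition of the Bell polynomials.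
-/

open PowerSeries Finset

theorem sigma'_eq_sigma_one (n : ℕ) : sigma' n = ArithmeticFunction.sigma 1 n :=
  (ArithmeticFunction.sigma_one_apply n).symm

theorem sigma'_prime_pow_mul {p n' : ℕ} (hp : p.Prime) (hn' : ¬ p ∣ n') (m : ℕ) :
    sigma' (p ^ m * n') = (∑ i ∈ range (m + 1), p ^ i) * sigma' n' := by
  rw [sigma'_eq_sigma_one, ArithmeticFunction.isMultiplicative_sigma.map_mul_of_coprime
    ((hp.coprime_iff_not_dvd.mpr hn').pow_left m), ArithmeticFunction.sigma_one_apply_prime_pow hp,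
    sigma'_eq_sigma_one]

theorem natCast_mul_eq_of_eq_sigma'_div {p : ℕ} (hp : p.Prime) {e : ℕ → ℚ}
    (he : ∀ m n' : ℕ, ¬ p ∣ n' →
      e (p ^ m * n') = (sigma' (p ^ m * n') : ℚ) / ((p ^ m * n' : ℕ) : ℚ) *
        (1 + p * (p - 1) / (p ^ (m + 1) - 1)))
    {n : ℕ} (hn : n ≠ 0) :
    (n : ℚ) * e n = (p + 1) * sigma' n - if p ∣ n then p ^ 2 * (sigma' (n / p) : ℚ) else 0 := by
  obtain ⟨m, n', hn', rfl⟩ := Nat.exists_eq_pow_mul_and_not_dvd hn p hp.ne_one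
  have hn'0 : n' ≠ 0 := by rintro rfl; exact hn' (dvd_zero p)
  have hp1 : (p : ℚ) - 1 ≠ 0 := sub_ne_zero.mpr (by exact_mod_cast hp.one_lt.ne')
  have hgeom : ∀ k, (p : ℚ) ^ (k + 1) - 1 = (∑ i ∈ range (k + 1), (p : ℚ) ^ i) * (p - 1) :=
    fun k => (geom_sum_mul _ _).symm
  have hsum : ∀ k, (∑ i ∈ range (k + 1), (p : ℚ) ^ i) ≠ 0 := fun k => by
    rw [sum_range_succ']; positivity
  have hσ : ∀ k, (sigma' (p ^ k * n') : ℚ) = (∑ i ∈ range (k + 1), (p : ℚ) ^ i) * sigma' n' := by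
    intro k; rw [sigma'_prime_pow_mul hp hn' k]; push_cast; rfl
  rw [he m n' hn', ← mul_assoc,
    mul_div_cancel₀ _ (by exact_mod_cast mul_ne_zero (pow_ne_zero m hp.ne_zero) hn'0), hgeom, hσ]
  cases m with
  | zero =>
    rw [if_neg (by simpa using hn')]
    simp only [zero_add, pow_zero, sum_range_one]
    field_simp
    ring
  | succ t =>
    have hdiv : p ^ (t + 1) * n' / p = p ^ t * n' := by
      rw [pow_succ, mul_right_comm, Nat.mul_div_cancel _ hp.pos]
    rw [if_pos (dvd_mul_of_dvd_left (dvd_pow_self p t.succ_ne_zero) n'), hdiv, hσ,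
      geom_sum_succ (n := t + 1)]
    field_simp [hsum]
    ring

theorem sum_range_ite_dvd_eq_sigma' {b N : ℕ} (hb : b ≠ 0) (hN : b ≤ N) :
    ∑ k ∈ range N, (if k + 1 ∣ b then k + 1 else 0) = sigma' b := by
  rw [sigma', ← Nat.filter_dvd_eq_divisors hb, sum_filter, sum_range_succ', ite_self, add_zero]
  refine (sum_subset (range_subset_range.mpr hN) fun k _ hk => if_neg fun hdvd => hk ?_).symm
  exact mem_range.mpr (Nat.le_of_dvd (Nat.pos_of_ne_zero hb) hdvd)

theorem sum_range_ite_mul_dvd {r m N : ℕ} (hr : 0 < r) (hm : m ≠ 0) (hN : m ≤ N) :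
    ∑ k ∈ range N, (if r * (k + 1) ∣ m then r * (k + 1) else 0)
      = if r ∣ m then r * sigma' (m / r) else 0 := by
  split_ifs with hrm
  · obtain ⟨b, rfl⟩ := hrm
    have hb : b ≠ 0 := by rintro rfl; exact hm (mul_zero r)
    simp only [Nat.mul_dvd_mul_iff_left hr, Nat.mul_div_cancel_left _ hr,
      ← sum_range_ite_dvd_eq_sigma' hb ((Nat.le_mul_of_pos_left b hr).trans hN), mul_sum, mul_ite,
      mul_zero]
  · exact sum_eq_zero fun k _ => if_neg fun h => hrm (dvd_trans (dvd_mul_right r _) h)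

theorem Derivation.leibniz_prod_of_eq_mul {R A : Type*} [CommSemiring R] [CommSemiring A]
    [Algebra R A] (D : Derivation R A A) {ι : Type*} (s : Finset ι) (f h : ι → A)
    (hf : ∀ i ∈ s, D (f i) = h i * f i) :
    D (∏ i ∈ s, f i) = (∑ i ∈ s, h i) * ∏ i ∈ s, f i := by
  classical
  induction s using Finset.induction_on with
  | empty => simp
  | insert a s ha ih =>
    rw [prod_insert ha, sum_insert ha, Derivation.leibniz, smul_eq_mul, smul_eq_mul,
      hf a (mem_insert_self a s), ih fun i hi => hf i (mem_insert_of_mem hi)]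
    ring

theorem Derivation.leibniz_pow_of_eq_mul {R A : Type*} [CommSemiring R] [CommSemiring A]
    [Algebra R A] (D : Derivation R A A) {f h : A} (hf : D f = h * f) (n : ℕ) :
    D (f ^ n) = (n * h) * f ^ n := by
  simpa [prod_const, sum_const, nsmul_eq_mul] using
    D.leibniz_prod_of_eq_mul (range n) (fun _ => f) (fun _ => h) (fun _ _ => hf)

namespace PowerSeries

variable {R : Type*} [CommRing R]

theorem eq_of_forall_X_pow_dvd_sub {f g : R⟦X⟧} (h : ∀ N, X ^ N ∣ f - g) : f = g := by
  ext n
  simpa [sub_eq_zero] using X_pow_dvd_iff.mp (h (n + 1)) n (Nat.lt_succ_self n)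

theorem X_pow_dvd_derivative_sub {f g : R⟦X⟧} {N : ℕ} (h : X ^ (N + 1) ∣ f - g) :
    X ^ N ∣ d⁄dX R f - d⁄dX R g := by
  rw [← map_sub]
  refine X_pow_dvd_iff.mpr fun n hn => ?_
  rw [coeff_derivative, X_pow_dvd_iff.mp h (n + 1) (by omega), zero_mul]

theorem X_pow_dvd_mk_coeff_sub {S : ℕ → R⟦X⟧} (hS : ∀ N M, N ≤ M → X ^ N ∣ S M - S N) (N : ℕ) :
    X ^ N ∣ mk (fun n => coeff n (S (n + 1))) - S N := by
  refine X_pow_dvd_iff.mpr fun n hn => ?_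
  rw [map_sub, coeff_mk, ← map_sub, ← neg_sub, map_neg, neg_eq_zero]
  exact X_pow_dvd_iff.mp (hS (n + 1) N hn) n (Nat.lt_succ_self n)

theorem eq_of_derivative_eq_mul {K : Type*} [Field K] [CharZero K] {a f g : K⟦X⟧}
    (hf : d⁄dX K f = a * f) (hg : d⁄dX K g = a * g) (h0 : constantCoeff f = constantCoeff g)
    (hg0 : constantCoeff g ≠ 0) : f = g := by
  have hinv : g * g⁻¹ = 1 := PowerSeries.mul_inv_cancel g hg0
  have hquot : f * g⁻¹ = 1 := by
    refine derivative.ext ?_ ?_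
    · rw [Derivation.leibniz, derivative_inv', hf, hg, smul_eq_mul, smul_eq_mul, derivative_one]
      linear_combination (-(a * f * g⁻¹)) * hinv
    · rw [map_mul, h0, map_one, ← map_mul, hinv, map_one]
  calc f = f * g⁻¹ * g := by rw [mul_assoc, mul_comm g⁻¹, hinv, mul_one]
    _ = g := by rw [hquot, one_mul]

end PowerSeries

theorem expPS_eq_subst {f : ℚ⟦X⟧} (hf : constantCoeff f = 0) : expPS f = (exp ℚ).subst f := by
  have hsub : HasSubst f := HasSubst.of_constantCoeff_zero' hf
  ext n
  rw [expPS, coeff_mk, coeff_subst' hsub, finsum_eq_sum_of_support_subset (s := range (n + 1))]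
  · refine sum_congr rfl fun k _ => ?_
    rw [coeff_exp, smul_eq_mul]
    simp [div_eq_inv_mul]
  · intro k hk
    rw [Function.mem_support] at hk
    rw [coe_range, Set.mem_Iio, Nat.lt_succ_iff]
    by_contra hlt
    refine hk ?_
    rw [X_pow_dvd_iff.mp (pow_dvd_pow_of_dvd (X_dvd_iff.mpr hf) k) n (by omega), smul_zero]

theorem derivative_expPS {f : ℚ⟦X⟧} (hf : constantCoeff f = 0) :
    d⁄dX ℚ (expPS f) = d⁄dX ℚ f * expPS f := by
  rw [expPS_eq_subst hf, derivative_subst (HasSubst.of_constantCoeff_zero' hf), derivative_exp,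
    mul_comm]

theorem constantCoeff_expPS (f : ℚ⟦X⟧) : constantCoeff (expPS f) = 1 := by
  rw [← coeff_zero_eq_constantCoeff_apply, expPS, coeff_mk]
  simp

def partialPochhammer (r N : ℕ) : ℚ⟦X⟧ := ∏ k ∈ range N, (1 - X ^ (r * (k + 1)))

variable {r : ℕ}

theorem X_pow_dvd_partialPochhammer_sub (hr : 0 < r) {N M : ℕ} (h : N ≤ M) :
    X ^ N ∣ partialPochhammer r M - partialPochhammer r N := by
  induction M, h using Nat.le_induction with
  | base => simp
  | succ M hNM ih =>
    have hXM : (X : ℚ⟦X⟧) ^ N ∣ X ^ (r * (M + 1)) := pow_dvd_pow X (by nlinarith)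
    rw [partialPochhammer, prod_range_succ, ← partialPochhammer, mul_one_sub, sub_right_comm]
    exact dvd_sub ih (dvd_mul_of_dvd_right hXM _)

theorem X_pow_dvd_pochhammerPS_sub (hr : 0 < r) (N : ℕ) :
    X ^ N ∣ pochhammerPS r - partialPochhammer r N :=
  X_pow_dvd_mk_coeff_sub (fun _ _ h => X_pow_dvd_partialPochhammer_sub hr h) N

theorem constantCoeff_pochhammerPS (hr : 0 < r) : constantCoeff (pochhammerPS r) = 1 := by
  rw [← coeff_zero_eq_constantCoeff_apply, pochhammerPS, coeff_mk, coeff_zero_eq_constantCoeff]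
  simp [hr.ne']

def logDerivOneSubXPow (c : ℕ) : ℚ⟦X⟧ :=
  PowerSeries.mk fun n => if c ∣ n + 1 then -(c : ℚ) else 0

theorem derivative_one_sub_X_pow (c : ℕ) :
    d⁄dX ℚ (1 - X ^ c) = logDerivOneSubXPow c * (1 - X ^ c) := by
  ext n
  rw [coeff_derivative, mul_sub, mul_one, map_sub, map_sub, coeff_mul_X_pow', logDerivOneSubXPow]
  simp only [coeff_mk, coeff_one, coeff_X_pow]
  have hdvd : c ≤ n → (c ∣ n - c + 1 ↔ c ∣ n + 1) := fun h => by
    rw [show n + 1 = n - c + 1 + c by omega, Nat.dvd_add_self_right]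
  have hle : c ∣ n + 1 → c ≤ n ∨ n + 1 = c := fun h => by
    have := Nat.le_of_dvd n.succ_pos h; omega
  split_ifs <;> subst_vars <;> grind [Nat.cast_add_one, dvd_refl]

theorem derivative_partialPochhammer (N : ℕ) :
    d⁄dX ℚ (partialPochhammer r N)
      = (∑ k ∈ range N, logDerivOneSubXPow (r * (k + 1))) * partialPochhammer r N :=
  (d⁄dX ℚ).leibniz_prod_of_eq_mul _ _ _ fun _ _ => derivative_one_sub_X_pow _

def pochhammerLogDeriv (r : ℕ) : ℚ⟦X⟧ :=
  PowerSeries.mk fun n => if r ∣ n + 1 then -(r * sigma' ((n + 1) / r) : ℚ) else 0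

theorem X_pow_dvd_pochhammerLogDeriv_sub (hr : 0 < r) (N : ℕ) :
    X ^ N ∣ pochhammerLogDeriv r - ∑ k ∈ range N, logDerivOneSubXPow (r * (k + 1)) := by
  refine X_pow_dvd_iff.mpr fun n hn => ?_
  have h := sum_range_ite_mul_dvd hr (Nat.add_one_ne_zero n) hn
  rw [map_sub, map_sum, sub_eq_zero, pochhammerLogDeriv, coeff_mk]
  simp only [logDerivOneSubXPow, coeff_mk]
  rw [← neg_inj, ← sum_neg_distrib]
  simp only [neg_ite, neg_neg, neg_zero]
  exact_mod_cast h.symm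

theorem derivative_pochhammerPS (hr : 0 < r) :
    d⁄dX ℚ (pochhammerPS r) = pochhammerLogDeriv r * pochhammerPS r := by
  refine eq_of_forall_X_pow_dvd_sub fun N => ?_
  have hP := X_pow_dvd_pochhammerPS_sub hr (N + 1)
  have hG := X_pow_dvd_pochhammerLogDeriv_sub hr (N + 1)
  have hd := X_pow_dvd_derivative_sub hP
  rw [derivative_partialPochhammer] at hd
  simpa using dvd_sub hd ((pow_dvd_pow X N.le_succ).trans (dvd_mul_sub_mul hG hP))

theorem derivative_mk_eq_of_natCast_mul {e : ℕ → ℚ} {p : ℕ}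
    (he : ∀ n : ℕ, n ≠ 0 → (n : ℚ) * e n
      = (p + 1) * sigma' n - if p ∣ n then p ^ 2 * (sigma' (n / p) : ℚ) else 0) :
    d⁄dX ℚ (PowerSeries.mk fun n => if n = 0 then 0 else e n)
      = (p : ℚ⟦X⟧) * pochhammerLogDeriv p - (p + 1) * pochhammerLogDeriv 1 := by
  ext n
  have h := he (n + 1) n.succ_ne_zero
  rw [coeff_derivative, coeff_mk, if_neg n.succ_ne_zero, ← map_natCast (C (R := ℚ)) p,
    ← map_one (C (R := ℚ)), ← map_add, map_sub, coeff_C_mul, coeff_C_mul, pochhammerLogDeriv,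
    pochhammerLogDeriv, coeff_mk, coeff_mk]
  push_cast at h
  simp only [isUnit_one, IsUnit.dvd, if_true, Nat.div_one]
  split_ifs at h ⊢ <;> linear_combination h

theorem pochhammerPS_pow_eq_expPS_mul {p : ℕ} (hp : 0 < p) {E : ℚ⟦X⟧}
    (hE0 : constantCoeff E = 0)
    (hE : d⁄dX ℚ E = (p : ℚ⟦X⟧) * pochhammerLogDeriv p - (p + 1) * pochhammerLogDeriv 1) :
    pochhammerPS p ^ p = expPS E * pochhammerPS 1 ^ (p + 1) := by
  have hPp := (d⁄dX ℚ).leibniz_pow_of_eq_mul (derivative_pochhammerPS hp) p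
  have hP1 := (d⁄dX ℚ).leibniz_pow_of_eq_mul (derivative_pochhammerPS one_pos) (p + 1)
  have hc1 : constantCoeff (pochhammerPS 1 ^ (p + 1)) = 1 := by
    rw [map_pow, constantCoeff_pochhammerPS one_pos, one_pow]
  refine eq_of_derivative_eq_mul hPp ?_ ?_ ?_
  · rw [Derivation.leibniz, derivative_expPS hE0, hP1, hE, smul_eq_mul, smul_eq_mul]
    push_cast
    ring
  · rw [map_mul, hc1, map_pow, constantCoeff_pochhammerPS hp, constantCoeff_expPS, one_pow, one_mul]
  · rw [map_mul, hc1, constantCoeff_expPS, one_mul]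
    exact one_ne_zero

theorem mk_bellComplete_eq_X_mul_expPS (e : ℕ → ℚ) :
    PowerSeries.mk (fun n => if n = 0 then 0 else
        bellComplete (fun m => (m.factorial : ℚ) * e m) (n - 1) / (n - 1).factorial) =
      X * expPS (PowerSeries.mk fun n => if n = 0 then 0 else e n) := by
  ext n
  cases n with
  | zero => simp
  | succ n =>
    rw [coeff_mk, if_neg n.succ_ne_zero, coeff_succ_X_mul, bellComplete, Nat.add_sub_cancel,
      mul_div_cancel_left₀ _ (by positivity)]
    congr
    ext m
    simp [Nat.factorial_ne_zero]

/-- As formal power series over `ℚ`,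
`49x·(x^7;x^7)_∞^7/(x;x)_∞^8 = 49·∑_{n≥1} B_{n−1}(1!·e_1, …, (n−1)!·e_{n−1}) x^n/(n−1)!`,
where `B_k` is the `k`-th complete exponential Bell polynomial and for `n = 7^m·n'` with
`m ≥ 0` and `7 ∤ n'`, `e_n = (σ(n)/n)·(1 + 42/(7^(m+1) − 1))`. -/
theorem stmt11 (e : ℕ → ℚ)
    (he : ∀ m n' : ℕ, ¬ 7 ∣ n' →
      e (7 ^ m * n') = ((sigma' (7 ^ m * n') : ℚ) / ((7 ^ m * n' : ℕ) : ℚ)) *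
        (1 + 42 / (7 ^ (m + 1) - 1))) :
    49 * PowerSeries.X * pochhammerPS 7 ^ 7 * (pochhammerPS 1 ^ 8)⁻¹ =
      49 * PowerSeries.mk (fun n => if n = 0 then 0 else
        bellComplete (fun m => (Nat.factorial m : ℚ) * e m) (n - 1) /
          (Nat.factorial (n - 1) : ℚ)) := by
  set E : ℚ⟦X⟧ := PowerSeries.mk fun n => if n = 0 then 0 else e n
  have hE0 : constantCoeff E = 0 := by simp [E, ← coeff_zero_eq_constantCoeff_apply]
  have key : pochhammerPS 7 ^ 7 = expPS E * pochhammerPS 1 ^ 8 :=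
    pochhammerPS_pow_eq_expPS_mul (by norm_num) hE0 <| derivative_mk_eq_of_natCast_mul fun _ =>
      natCast_mul_eq_of_eq_sigma'_div (by norm_num) fun m n' h => by rw [he m n' h]; norm_num
  rw [mk_bellComplete_eq_X_mul_expPS, key]
  have hinv : pochhammerPS 1 ^ 8 * (pochhammerPS 1 ^ 8)⁻¹ = 1 :=
    PowerSeries.mul_inv_cancel _ (by rw [map_pow, constantCoeff_pochhammerPS one_pos]; norm_num)
  linear_combination (49 * X * expPS E) * hinv
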